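/- Let f₁, …, f_N : ℝ^d → ℝ be differentiable with F(w) = (1/N)∑_{i=1}^N f_i(w), and suppose each gradient ∇f_i is L-Lipschitz, i.e. ‖∇f_i(x) − ∇f_i(y)‖ ≤ L‖x − y‖ for all x, y. Let w* ∈ ℝ^d satisfy ∇F(w*) = 0. Then for all w, w̃ ∈ ℝ^d, the second moment of the variance-reduced stochastic gradient over a uniformly random index i satisfies (1/N)∑_{i=1}^N ‖ĝ_i(w; w̃)‖² ≤ 2L²‖w − w*‖² + 2L²‖w̃ − w*‖², where ĝ_i(w; w̃) = ∇f_i(w) − ∇f_i(w̃) + ∇F(w̃). -/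

import Mathlib

/-!
Write `gᵢ = ∇fᵢ` and `m = ∇F(w̃)`. Since `∇F(w*) = 0`, the vectors `vᵢ = gᵢ(w̃) - gᵢ(w*)`
have mean `m`, and `ĝᵢ = (gᵢ(w) - gᵢ(w*)) - (vᵢ - m)`. Hence
`‖ĝᵢ‖² ≤ 2‖gᵢ(w) - gᵢ(w*)‖² + 2‖vᵢ - m‖²`; the first term is at most `2L²‖w - w*‖²` by
Lipschitz continuity, and the average of the second is a variance, hence at most the second
moment of `vᵢ`, which is at most `2L²‖w̃ - w*‖²`.
-/

open Finset

section Gradient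

variable {F : Type*} [NormedAddCommGroup F] [InnerProductSpace ℝ F] [CompleteSpace F]
  {x : F}

theorem HasGradientAt.sum {ι : Type*} (s : Finset ι) {f : ι → F → ℝ} {f' : ι → F}
    (h : ∀ i ∈ s, HasGradientAt (f i) (f' i) x) :
    HasGradientAt (fun y => ∑ i ∈ s, f i y) (∑ i ∈ s, f' i) x := by
  rw [hasGradientAt_iff_hasFDerivAt, map_sum]
  exact HasFDerivAt.fun_sum fun i hi => (h i hi).hasFDerivAt

theorem HasGradientAt.const_mul (c : ℝ) {f : F → ℝ} {f' : F} (h : HasGradientAt f f' x) :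
    HasGradientAt (fun y => c * f y) (c • f') x := by
  rw [hasGradientAt_iff_hasFDerivAt, map_smul]
  exact h.hasFDerivAt.const_mul c

end Gradient

theorem norm_sub_sq_le_two_mul {E : Type*} [SeminormedAddCommGroup E] (a b : E) :
    ‖a - b‖ ^ 2 ≤ 2 * ‖a‖ ^ 2 + 2 * ‖b‖ ^ 2 := by
  calc ‖a - b‖ ^ 2 ≤ (‖a‖ + ‖b‖) ^ 2 := pow_le_pow_left₀ (norm_nonneg _) (norm_sub_le a b) 2
    _ ≤ 2 * ‖a‖ ^ 2 + 2 * ‖b‖ ^ 2 := by linarith [add_sq_le (a := ‖a‖) (b := ‖b‖)]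

section Moments

open scoped InnerProductSpace

variable {ι E : Type*} [Fintype ι] [NormedAddCommGroup E] [InnerProductSpace ℝ E]

theorem sum_norm_sub_sq_le_sum_norm_sq (v : ι → E) {m : E}
    (hm : ∑ i, v i = (Fintype.card ι : ℝ) • m) :
    ∑ i, ‖v i - m‖ ^ 2 ≤ ∑ i, ‖v i‖ ^ 2 := by
  have hcross : ∑ i, ⟪v i, m⟫_ℝ = Fintype.card ι * ‖m‖ ^ 2 := by
    rw [← sum_inner, hm, real_inner_smul_left, real_inner_self_eq_norm_sq]
  have hexpand : ∑ i, ‖v i - m‖ ^ 2 = ∑ i, ‖v i‖ ^ 2 - Fintype.card ι * ‖m‖ ^ 2 := by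
    simp only [norm_sub_sq_real, sum_add_distrib, sum_sub_distrib, ← mul_sum, hcross,
      sum_const, card_univ, nsmul_eq_mul]
    ring
  rw [hexpand]
  linarith [show 0 ≤ (Fintype.card ι : ℝ) * ‖m‖ ^ 2 by positivity]

theorem sum_norm_sub_sub_add_sq_le (u v : ι → E) {m : E}
    (hm : ∑ i, v i = (Fintype.card ι : ℝ) • m) {A B : ℝ}
    (hu : ∀ i, ‖u i‖ ^ 2 ≤ A) (hv : ∀ i, ‖v i‖ ^ 2 ≤ B) :
    ∑ i, ‖u i - v i + m‖ ^ 2 ≤ Fintype.card ι * (2 * A + 2 * B) := by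
  calc ∑ i, ‖u i - v i + m‖ ^ 2 ≤ ∑ i, (2 * ‖u i‖ ^ 2 + 2 * ‖v i - m‖ ^ 2) := by
        gcongr with i
        rw [sub_add]
        exact norm_sub_sq_le_two_mul (u i) (v i - m)
    _ = 2 * ∑ i, ‖u i‖ ^ 2 + 2 * ∑ i, ‖v i - m‖ ^ 2 := by
        rw [sum_add_distrib, mul_sum, mul_sum]
    _ ≤ 2 * ∑ _i : ι, A + 2 * ∑ _i : ι, B := by
        gcongr 2 * ?_ + 2 * ?_
        · exact sum_le_sum fun i _ => hu i
        · exact (sum_norm_sub_sq_le_sum_norm_sq v hm).trans (sum_le_sum fun i _ => hv i)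
    _ = Fintype.card ι * (2 * A + 2 * B) := by
        simp only [sum_const, card_univ, nsmul_eq_mul]
        ring

end Moments

/-- If each gradient `∇ f i` is `L`-Lipschitz and `∇F(w*) = 0`, then for all `w, wt` the
second moment of the variance-reduced stochastic gradient
`ĝ_i(w; wt) = ∇f_i(w) − ∇f_i(wt) + ∇F(wt)` over a uniformly random index `i` satisfies
`(1/N) ∑ i, ‖ĝ_i(w; wt)‖² ≤ 2L²‖w − w*‖² + 2L²‖wt − w*‖²`. -/
theorem stmt_6 (d N : ℕ) (hN : 1 ≤ N)
    (f : Fin N → EuclideanSpace ℝ (Fin d) → ℝ)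
    (hf : ∀ i, Differentiable ℝ (f i))
    (F : EuclideanSpace ℝ (Fin d) → ℝ)
    (hF : ∀ w, F w = (1 / (N : ℝ)) * ∑ i, f i w)
    (L : ℝ)
    (hLip : ∀ i x y, ‖gradient (f i) x - gradient (f i) y‖ ≤ L * ‖x - y‖)
    (wstar : EuclideanSpace ℝ (Fin d)) (hstat : gradient F wstar = 0)
    (w wt : EuclideanSpace ℝ (Fin d)) :
    (1 / (N : ℝ)) * ∑ i,
        ‖gradient (f i) w - gradient (f i) wt + gradient F wt‖ ^ 2
      ≤ 2 * L ^ 2 * ‖w - wstar‖ ^ 2 + 2 * L ^ 2 * ‖wt - wstar‖ ^ 2 := by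
  have hN0 : (N : ℝ) ≠ 0 := Nat.cast_ne_zero.mpr (by omega)
  have hgrad : ∀ x, gradient F x = (1 / (N : ℝ)) • ∑ i, gradient (f i) x := fun x => by
    rw [funext hF]
    exact ((HasGradientAt.sum _ fun i _ => (hf i x).hasGradientAt).const_mul _).gradient
  have hmean : ∑ i, (gradient (f i) wt - gradient (f i) wstar) =
      (Fintype.card (Fin N) : ℝ) • gradient F wt := by
    have hsum_star : ∑ i, gradient (f i) wstar = 0 := by
      simpa [hgrad, hN0] using hstat
    rw [sum_sub_distrib, hsum_star, sub_zero, hgrad, Fintype.card_fin, smul_smul,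
      mul_one_div_cancel hN0, one_smul]
  have hLip_sq : ∀ i x, ‖gradient (f i) x - gradient (f i) wstar‖ ^ 2 ≤ L ^ 2 * ‖x - wstar‖ ^ 2 :=
    fun i x => (pow_le_pow_left₀ (norm_nonneg _) (hLip i x wstar) 2).trans_eq (mul_pow ..)
  have hsum := sum_norm_sub_sub_add_sq_le _ _ hmean (hLip_sq · w) (hLip_sq · wt)
  simp only [sub_sub_sub_cancel_right, Fintype.card_fin] at hsum
  calc (1 / (N : ℝ)) * ∑ i, ‖gradient (f i) w - gradient (f i) wt + gradient F wt‖ ^ 2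
      ≤ (1 / (N : ℝ)) * (N * (2 * (L ^ 2 * ‖w - wstar‖ ^ 2) + 2 * (L ^ 2 * ‖wt - wstar‖ ^ 2))) :=
        mul_le_mul_of_nonneg_left hsum (by positivity)
    _ = 2 * L ^ 2 * ‖w - wstar‖ ^ 2 + 2 * L ^ 2 * ‖wt - wstar‖ ^ 2 := by
        field_simp
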